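/- Let R be a ring graded by an abelian group G, with R = ⊕_{ν∈G} R_ν. Suppose an element t ∈ R_ν satisfies (v^{λ_i} − v^{μ_i+ν_i}) t = 0 in some quotient for all i, where v is a unit of infinite multiplicative order in the base ring and λ, μ, ν ∈ ℤ^n with ν ≠ λ − μ. Then in the quotient defined by the two-sided relations K^j ≡ v^{λ·j} on the left and K^j ≡ v^{μ·j} on the right, the image of any homogeneous element of degree ν ≠ λ − μ is zero. -/

import Mathlib

/-!
Pick `i` with `ν_i ≠ λ_i - μ_i` and use the generators with `j = e_i`, where `K^j = K_i`.
For `t` of degree `ν` the commutation rule `K_i t = v^{ν_i} t K_i` gives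
`(K_i - v^{λ_i}) t - v^{ν_i} t (K_i - v^{μ_i}) = (v^{ν_i + μ_i} - v^{λ_i}) t`,
and the scalar on the right is nonzero because `v` has infinite order.
-/

theorem List.prod_ofFn_mulSingle {M : Type*} [Monoid M] :
    ∀ {n : ℕ} (i : Fin n) (a : M), (List.ofFn (Pi.mulSingle i a)).prod = a
  | 0, i, _ => i.elim0
  | n + 1, i, a => by
    rw [List.ofFn_succ, List.prod_cons]
    cases i using Fin.cases with
    | zero => simp [Fin.succ_ne_zero]
    | succ i =>
      have hsucc : (fun k : Fin n => (Pi.mulSingle i.succ a : Fin (n + 1) → M) k.succ)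
          = (Pi.mulSingle i a : Fin n → M) := by
        ext k; simp [Pi.mulSingle_apply]
      rw [hsucc, List.prod_ofFn_mulSingle i a, Pi.mulSingle_eq_of_ne (Fin.succ_ne_zero i).symm,
        one_mul]

theorem sub_algebraMap_mul_sub_smul_mul_sub {R A : Type*} [CommRing R] [Ring A] [Algebra R A]
    {k t : A} {c : R} (h : k * t = c • (t * k)) (a b : R) :
    (k - algebraMap R A a) * t - c • (t * (k - algebraMap R A b)) = (c * b - a) • t := by
  rw [sub_mul, mul_sub, h, smul_sub, ← Algebra.commutes, ← Algebra.smul_def, ← Algebra.smul_def,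
    smul_smul, sub_smul]
  abel

theorem mem_of_mul_eq_smul_mul {F A : Type*} [Field F] [Ring A] [Algebra F A] {k t : A}
    {c a b : F}
    (h : k * t = c • (t * k)) (hab : c * b ≠ a) {p : Submodule F A}
    (hl : (k - algebraMap F A a) * t ∈ p) (hr : t * (k - algebraMap F A b) ∈ p) : t ∈ p := by
  rw [← p.smul_mem_iff (sub_ne_zero.mpr hab), ← sub_algebraMap_mul_sub_smul_mul_sub h]
  exact p.sub_mem hl (p.smul_mem c hr)

/-- Abstract form of Lemma 2.3: let `D` be a `ℤ^n`-graded algebra over a field `F`, `v` a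
unit of infinite multiplicative order in `F`, and `K_1,…,K_n` invertible elements of `D`
satisfying `K_i t = v^{ν_i} t K_i` for homogeneous `t` of degree `ν`.  Then every
homogeneous element of degree `ν ≠ λ − μ` lies in the submodule
`Σ_j (K^j − v^{λ·j})D + Σ_j D(K^j − v^{μ·j})`, i.e. its image in the quotient `λD_μ`
vanishes. -/
theorem stmt11 (n : ℕ) (F : Type*) [Field F] (D : Type*) [Ring D] [Algebra F D]
    (v : Fˣ) (hv : ∀ m : ℤ, v ^ m = 1 → m = 0)
    (Dcomp : (Fin n → ℤ) → Submodule F D)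
    (K : Fin n → Dˣ)
    (hcomm : ∀ (nu : Fin n → ℤ), ∀ t ∈ Dcomp nu, ∀ i : Fin n,
        (K i : D) * t = algebraMap F D ((v ^ (nu i) : Fˣ) : F) * (t * (K i : D)))
    (lam mu nu : Fin n → ℤ) (hne : nu ≠ lam - mu) :
    Dcomp nu ≤ Submodule.span F
      ({x : D | ∃ (j : Fin n → ℤ) (d : D),
          x = ((((List.ofFn (fun i : Fin n => K i ^ j i)).prod : Dˣ) : D)
            - algebraMap F D ((v ^ (∑ i : Fin n, lam i * j i) : Fˣ) : F)) * d} ∪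
       {x : D | ∃ (j : Fin n → ℤ) (d : D),
          x = d * ((((List.ofFn (fun i : Fin n => K i ^ j i)).prod : Dˣ) : D)
            - algebraMap F D ((v ^ (∑ i : Fin n, mu i * j i) : Fˣ) : F))}) := by
  intro t ht
  obtain ⟨i, hi⟩ := Function.ne_iff.mp hne
  have hK : (List.ofFn fun k => K k ^ (Pi.single i 1 : Fin n → ℤ) k).prod = K i := by
    have hpow : (fun k => K k ^ (Pi.single i 1 : Fin n → ℤ) k) = Pi.mulSingle i (K i) := by
      funext k
      by_cases hk : k = i <;> simp [hk]
    rw [hpow, List.prod_ofFn_mulSingle]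
  have hsum (w : Fin n → ℤ) : ∑ k, w k * (Pi.single i 1 : Fin n → ℤ) k = w i := by
    simp [Pi.single_apply]
  have hv_ne : ((v ^ nu i : Fˣ) : F) * ((v ^ mu i : Fˣ) : F) ≠ ((v ^ lam i : Fˣ) : F) := by
    rw [← Units.val_mul, ← zpow_add, Ne, Units.val_inj]
    intro h
    have hdiff := hv (nu i + mu i - lam i) (by rw [zpow_sub, h, mul_inv_cancel])
    exact hi (by rw [Pi.sub_apply]; omega)
  refine mem_of_mul_eq_smul_mul (by rw [hcomm nu t ht i, Algebra.smul_def]) hv_ne ?_ ?_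
  · exact Submodule.subset_span (Or.inl ⟨Pi.single i 1, t, by rw [hK, hsum]⟩)
  · exact Submodule.subset_span (Or.inr ⟨Pi.single i 1, t, by rw [hK, hsum]⟩)
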